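/- For all positive integers k and ℓ with 1 ≤ k ≤ ℓ, there exists a tree T with pc(T) = ℓ and F_t(T) = k + ℓ. -/

import Mathlib

/-- The forcing process: vertices that eventually get colored starting from `S`.
A colored vertex with exactly one uncolored neighbor forces that neighbor. -/
inductive SimpleGraph.Forced {V : Type*} (G : SimpleGraph V) (S : Set V) : V → Prop
  | init (v : V) (hv : v ∈ S) : SimpleGraph.Forced G S v
  | force (u w : V) (hu : SimpleGraph.Forced G S u) (hadj : G.Adj u w)
      (huniq : ∀ x, G.Adj u x → x ≠ w → SimpleGraph.Forced G S x) :
      SimpleGraph.Forced G S w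

/-- `S` is a zero forcing set if the forcing process colors every vertex. -/
def SimpleGraph.IsZeroForcingSet {V : Type*} (G : SimpleGraph V) (S : Set V) : Prop :=
  ∀ v, G.Forced S v

/-- The zero forcing number `Z(G)`. -/
noncomputable def SimpleGraph.zeroForcingNumber {V : Type*} (G : SimpleGraph V) : ℕ :=
  sInf {n | ∃ S : Set V, G.IsZeroForcingSet S ∧ S.ncard = n}

/-- A total forcing set: a zero forcing set inducing a subgraph without isolated vertices. -/
def SimpleGraph.IsTotalForcingSet {V : Type*} (G : SimpleGraph V) (S : Set V) : Prop :=
  G.IsZeroForcingSet S ∧ ∀ v ∈ S, ∃ u ∈ S, G.Adj v u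

/-- The total forcing number `F_t(G)`. -/
noncomputable def SimpleGraph.totalForcingNumber {V : Type*} (G : SimpleGraph V) : ℕ :=
  sInf {n | ∃ S : Set V, G.IsTotalForcingSet S ∧ S.ncard = n}

/-- A set of vertices that is the vertex set of a path (as a subgraph) of `G`. -/
def SimpleGraph.IsPathSet {V : Type*} (G : SimpleGraph V) (P : Set V) : Prop :=
  ∃ (u v : V) (w : G.Walk u v), w.IsPath ∧ {x | x ∈ w.support} = P

/-- A path cover: a collection of vertex-disjoint paths partitioning the vertex set. -/
def SimpleGraph.IsPathCover {V : Type*} (G : SimpleGraph V) (P : Set (Set V)) : Prop :=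
  (∀ Q ∈ P, G.IsPathSet Q) ∧ P.PairwiseDisjoint id ∧ ⋃₀ P = Set.univ

/-- The path cover number `pc(G)`. -/
noncomputable def SimpleGraph.pathCoverNumber {V : Type*} (G : SimpleGraph V) : ℕ :=
  sInf {n | ∃ P : Set (Set V), G.IsPathCover P ∧ P.ncard = n}

/-- The matching number `α'(G)`. -/
noncomputable def SimpleGraph.matchingNumber {V : Type*} (G : SimpleGraph V) : ℕ :=
  sSup {n | ∃ M : G.Subgraph, M.IsMatching ∧ M.edgeSet.ncard = n}

/-- A leaf is a vertex with exactly one neighbor. -/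
def SimpleGraph.IsLeaf {V : Type*} (G : SimpleGraph V) (v : V) : Prop :=
  (G.neighborSet v).ncard = 1

/-!
Let `T` consist of `k` disjoint paths `x_i y_i z_i` ("cherries"), with `y_1` joined to every
other `y_i` and carrying `l - k` further leaves. Every vertex outside `C = {y_i}` is a leaf
hanging from `C`, and every vertex of `C` carries two leaves.

A leaf can only be an endpoint of a path, and a path with two leaves meets `C`; summing over a
path cover gives `#leaves ≤ pc(T) + |C|`, i.e. `pc(T) ≥ (k + l) - k = l`, attained by the
cherries together with the extra leaves as trivial paths. Two leaves with the same neighbour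
cannot both be missing from a zero forcing set, so a total forcing set contains `C` and misses at
most one leaf at each vertex of `C`: `F_t(T) ≥ |V| - |C| = k + l`, attained by omitting one leaf
of each cherry.
-/

namespace SimpleGraph

variable {V W ι : Type*} {G : SimpleGraph V} {H : SimpleGraph W}

lemma Walk.IsPath.eq_or_eq_of_neighborSet_subsingleton {u v x : V} {w : G.Walk u v}
    (hw : w.IsPath) (hx : x ∈ w.support) (hsub : (G.neighborSet x).Subsingleton) :
    x = u ∨ x = v := by
  by_contra! hne
  obtain ⟨i, rfl, hi⟩ := Walk.mem_support_iff_exists_getVert.mp hx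
  have hi0 : i ≠ 0 := by rintro rfl; simp at hne
  have hil : i < w.length := lt_of_le_of_ne hi (by rintro rfl; simp at hne)
  obtain ⟨y, z, hyz, hN⟩ :=
    Set.ncard_eq_two.mp (hw.ncard_neighborSet_toSubgraph_internal_eq_two hi0 hil)
  have hsubset := w.toSubgraph.neighborSet_subset (w.getVert i)
  exact hyz (hsub (hsubset (by simp [hN])) (hsubset (by simp [hN])))

lemma Walk.IsCycle.exists_adj_ne_of_mem_support {u x : V} {c : G.Walk u u} (hc : c.IsCycle)
    (hx : x ∈ c.support) :
    ∃ y z, y ≠ z ∧ G.Adj x y ∧ G.Adj x z ∧ y ∈ c.support ∧ z ∈ c.support := by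
  obtain ⟨y, z, hyz, hN⟩ := Set.ncard_eq_two.mp (hc.ncard_neighborSet_toSubgraph_eq_two hx)
  have hy : c.toSubgraph.Adj x y := by simp [← Subgraph.mem_neighborSet, hN]
  have hz : c.toSubgraph.Adj x z := by simp [← Subgraph.mem_neighborSet, hN]
  exact ⟨y, z, hyz, hy.adj_sub, hz.adj_sub, c.mem_verts_toSubgraph.mp hy.snd_mem,
    c.mem_verts_toSubgraph.mp hz.snd_mem⟩

lemma IsPathSet.nonempty {Q : Set V} (hQ : G.IsPathSet Q) : Q.Nonempty := by
  obtain ⟨u, -, w, -, rfl⟩ := hQ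
  exact ⟨u, w.start_mem_support⟩

lemma isPathSet_singleton (v : V) : G.IsPathSet {v} :=
  ⟨v, v, .nil, .nil, by simp⟩

lemma IsPathCover.isPartition {P : Set (Set V)} (hP : G.IsPathCover P) :
    Setoid.IsPartition P := by
  obtain ⟨hpath, hdisj, hcover⟩ := hP
  refine ⟨fun h => Set.not_nonempty_empty (hpath ∅ h).nonempty, fun v => ?_⟩
  obtain ⟨Q, hQ, hv⟩ := Set.mem_sUnion.mp (hcover ▸ Set.mem_univ v)
  exact ⟨Q, ⟨hQ, hv⟩, fun Q' ⟨hQ', hv'⟩ =>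
    hdisj.elim hQ' hQ (Set.not_disjoint_iff.mpr ⟨v, hv', hv⟩)⟩

lemma pathCoverNumber_le {P : Set (Set V)} (hP : G.IsPathCover P) :
    G.pathCoverNumber ≤ P.ncard :=
  Nat.sInf_le ⟨P, hP, rfl⟩

lemma isPathCover_range_preimage (f : V → ι) (hf : ∀ i, G.IsPathSet (f ⁻¹' {i})) :
    G.IsPathCover (Set.range fun i => f ⁻¹' {i}) := by
  refine ⟨?_, ?_, ?_⟩
  · rintro _ ⟨i, rfl⟩
    exact hf i
  · rintro _ ⟨i, rfl⟩ _ ⟨j, rfl⟩ hne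
    exact Disjoint.preimage f (Set.disjoint_singleton.mpr fun hij => hne (hij ▸ rfl))
  · exact Set.eq_univ_of_forall fun v => Set.mem_sUnion.mpr ⟨_, ⟨f v, rfl⟩, rfl⟩

lemma pathCoverNumber_le_of_isPathSet_preimage [Finite ι] (f : V → ι)
    (hf : ∀ i, G.IsPathSet (f ⁻¹' {i})) : G.pathCoverNumber ≤ Nat.card ι :=
  calc G.pathCoverNumber ≤ (Set.range fun i => f ⁻¹' {i}).ncard :=
        pathCoverNumber_le (isPathCover_range_preimage f hf)
    _ ≤ Nat.card ι := by
        rw [← Set.image_univ, ← Set.ncard_univ]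
        exact Set.ncard_image_le (Set.toFinite _)

lemma exists_isPathCover_ncard_eq_pathCoverNumber :
    ∃ P, G.IsPathCover P ∧ P.ncard = G.pathCoverNumber :=
  Nat.sInf_mem (s := {n | ∃ P : Set (Set V), G.IsPathCover P ∧ P.ncard = n})
    ⟨_, _, isPathCover_range_preimage id fun v => isPathSet_singleton v, rfl⟩

lemma IsZeroForcingSet.mem_or_mem_of_adj_iff_adj {S : Set V} (hS : G.IsZeroForcingSet S)
    {a b : V} (hab : a ≠ b) (hN : ∀ x, G.Adj a x ↔ G.Adj b x) : a ∈ S ∨ b ∈ S := by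
  by_contra! h
  have key : ∀ v, G.Forced S v → v ≠ a ∧ v ≠ b := by
    intro v hv
    induction hv with
    | init v hv => exact ⟨fun h' => h.1 (h' ▸ hv), fun h' => h.2 (h' ▸ hv)⟩
    | force u w _ hadj _ _ ih =>
      -- a vertex adjacent to one of `a`, `b` is adjacent to both, so it never has only one of
      -- them as its last uncolored neighbour
      refine ⟨?_, ?_⟩ <;> rintro rfl
      · exact (ih b (G.adj_symm ((hN u).mp (G.adj_symm hadj))) hab.symm).2 rfl
      · exact (ih a (G.adj_symm ((hN u).mpr (G.adj_symm hadj))) hab).1 rfl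
  exact (key a (hS a)).1 rfl

lemma isZeroForcingSet_of_forall_notMem {S : Set V}
    (h : ∀ v ∉ S, ∃ u ∈ S, G.Adj u v ∧ ∀ x, G.Adj u x → x ≠ v → x ∈ S) :
    G.IsZeroForcingSet S := by
  intro v
  by_cases hv : v ∈ S
  · exact .init v hv
  · obtain ⟨u, hu, huv, hrest⟩ := h v hv
    exact .force u v (.init u hu) huv fun x hx hxv => .init x (hrest x hx hxv)

def PendantOn (G : SimpleGraph V) (C : Set V) (σ : V → V) : Prop :=
  ∀ v ∉ C, σ v ∈ C ∧ ∀ x, G.Adj v x ↔ x = σ v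

section PendantOn

variable {C : Set V} {σ : V → V}

lemma PendantOn.adj_iff (hG : G.PendantOn C σ) {v x : V} (hv : v ∉ C) :
    G.Adj v x ↔ x = σ v :=
  (hG v hv).2 x

lemma PendantOn.adj (hG : G.PendantOn C σ) {v : V} (hv : v ∉ C) : G.Adj v (σ v) :=
  (hG.adj_iff hv).mpr rfl

lemma PendantOn.neighborSet_eq (hG : G.PendantOn C σ) {v : V} (hv : v ∉ C) :
    G.neighborSet v = {σ v} :=
  Set.ext (hG v hv).2

lemma PendantOn.adj_iff_adj (hG : G.PendantOn C σ) {a b : V} (ha : a ∉ C) (hb : b ∉ C)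
    (hab : σ a = σ b) (x : V) : G.Adj a x ↔ G.Adj b x := by
  rw [hG.adj_iff ha, hG.adj_iff hb, hab]

lemma PendantOn.ncard_compl_inter_le [Finite V] (hG : G.PendantOn C σ) {Q : Set V}
    (hQ : G.IsPathSet Q) : (Cᶜ ∩ Q).ncard ≤ 1 + (C ∩ Q).ncard := by
  obtain ⟨u, v, w, hw, rfl⟩ := hQ
  have hends : Cᶜ ∩ {x | x ∈ w.support} ⊆ {u, v} := fun x ⟨hxC, hx⟩ =>
    hw.eq_or_eq_of_neighborSet_subsingleton hx
      (hG.neighborSet_eq hxC ▸ Set.subsingleton_singleton)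
  have hcard : (Cᶜ ∩ {x | x ∈ w.support}).ncard ≤ ({u, v} : Set V).ncard :=
    Set.ncard_le_ncard hends
  rcases eq_or_ne u v with rfl | huv
  · rw [Set.pair_eq_singleton, Set.ncard_singleton] at hcard
    omega
  · have hmeet : (C ∩ {x | x ∈ w.support}).Nonempty := by
      by_cases hu : u ∈ C
      · exact ⟨u, hu, w.start_mem_support⟩
      · have hsnd : w.snd = σ u := (hG.adj_iff hu).mp (w.adj_snd (Walk.not_nil_of_ne huv))
        exact ⟨w.snd, hsnd ▸ (hG u hu).1, w.getVert_mem_support 1⟩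
    rw [Set.ncard_pair huv] at hcard
    have := hmeet.ncard_pos
    omega

lemma PendantOn.ncard_compl_le [Finite V] (hG : G.PendantOn C σ) {P : Set (Set V)}
    (hP : G.IsPathCover P) : Cᶜ.ncard ≤ P.ncard + C.ncard :=
  calc Cᶜ.ncard = ∑ᶠ Q : P, (Cᶜ ∩ Q).ncard := hP.isPartition.ncard_eq_finsum _
    _ ≤ ∑ᶠ Q : P, (1 + (C ∩ Q).ncard) :=
      finsum_le_finsum' (Set.toFinite _) (Set.toFinite _)
        fun Q => hG.ncard_compl_inter_le (hP.1 Q Q.2)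
    _ = P.ncard + C.ncard := by
      rw [finsum_add_distrib (Set.toFinite _) (Set.toFinite _),
        finsum_set_coe_eq_finsum_mem (f := fun _ => 1), finsum_one,
        ← hP.isPartition.ncard_eq_finsum]

lemma PendantOn.isTotalForcingSet_iff (hG : G.PendantOn C σ)
    (hC : ∀ c ∈ C, ∃ a b, a ∉ C ∧ b ∉ C ∧ a ≠ b ∧ σ a = c ∧ σ b = c) {S : Set V} :
    G.IsTotalForcingSet S ↔ C ⊆ S ∧ Sᶜ.InjOn σ := by
  constructor
  · rintro ⟨hZ, htot⟩
    have hCS : C ⊆ S := by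
      intro c hc
      obtain ⟨a, b, ha, hb, hab, rfl, hbc⟩ := hC c hc
      have leaf_mem : ∀ v ∉ C, v ∈ S → σ v ∈ S := fun v hv hvS => by
        obtain ⟨u, hu, hvu⟩ := htot v hvS
        rwa [(hG.adj_iff hv).mp hvu] at hu
      rcases hZ.mem_or_mem_of_adj_iff_adj hab (hG.adj_iff_adj ha hb hbc.symm) with haS | hbS
      · exact leaf_mem a ha haS
      · exact hbc ▸ leaf_mem b hb hbS
    refine ⟨hCS, fun a ha b hb hab => ?_⟩
    by_contra hne
    have ha' : a ∉ C := fun h => ha (hCS h)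
    have hb' : b ∉ C := fun h => hb (hCS h)
    exact (hZ.mem_or_mem_of_adj_iff_adj hne (hG.adj_iff_adj ha' hb' hab)).elim ha hb
  · rintro ⟨hCS, hinj⟩
    refine ⟨isZeroForcingSet_of_forall_notMem fun v hv => ?_, fun v hvS => ?_⟩
    · have hvC : v ∉ C := fun h => hv (hCS h)
      refine ⟨σ v, hCS (hG v hvC).1, (hG.adj hvC).symm, fun x hx hxv => ?_⟩
      by_contra hxS
      have hxC : x ∉ C := fun h => hxS (hCS h)
      exact hxv (hinj hxS hv ((hG.adj_iff hxC).mp hx.symm).symm)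
    · by_cases hvC : v ∈ C
      · obtain ⟨a, b, ha, hb, hab, hac, hbc⟩ := hC v hvC
        by_cases haS : a ∈ S
        · exact ⟨a, haS, hac ▸ (hG.adj ha).symm⟩
        · have hbS : b ∈ S := by
            by_contra hbS
            exact hab (hinj haS hbS (hac.trans hbc.symm))
          exact ⟨b, hbS, hbc ▸ (hG.adj hb).symm⟩
      · exact ⟨σ v, hCS (hG v hvC).1, hG.adj hvC⟩

lemma PendantOn.totalForcingNumber_add_ncard [Finite V] (hG : G.PendantOn C σ)
    (hC : ∀ c ∈ C, ∃ a b, a ∉ C ∧ b ∉ C ∧ a ≠ b ∧ σ a = c ∧ σ b = c) :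
    G.totalForcingNumber + C.ncard = Nat.card V := by
  have hleaf : ∀ c : C, ∃ a, a ∉ C ∧ σ a = c := fun c => by
    obtain ⟨a, -, ha, -, -, hac, -⟩ := hC c c.2
    exact ⟨a, ha, hac⟩
  choose leaf hleafC hσleaf using hleaf
  have hleaf_inj : Function.Injective leaf := fun c c' h =>
    Subtype.ext ((hσleaf c).symm.trans (h ▸ hσleaf c'))
  have hS₀ : G.IsTotalForcingSet (Set.range leaf)ᶜ := by
    refine (hG.isTotalForcingSet_iff hC).mpr ⟨?_, ?_⟩
    · rintro c hc ⟨c', rfl⟩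
      exact hleafC c' hc
    · rw [compl_compl]
      rintro _ ⟨c, rfl⟩ _ ⟨c', rfl⟩ h
      rw [hσleaf, hσleaf, Subtype.coe_inj] at h
      rw [h]
  obtain ⟨S, hS, hScard⟩ : G.totalForcingNumber ∈ _ := Nat.sInf_mem ⟨_, _, hS₀, rfl⟩
  have hle : G.totalForcingNumber ≤ (Set.range leaf)ᶜ.ncard := Nat.sInf_le ⟨_, hS₀, rfl⟩
  have hrange : (Set.range leaf).ncard = C.ncard := by
    rw [Set.ncard_range_of_injective hleaf_inj, Nat.card_coe_set_eq]
  obtain ⟨hCS, hinj⟩ := (hG.isTotalForcingSet_iff hC).mp hS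
  have hSc : Sᶜ.ncard ≤ C.ncard :=
    Set.ncard_le_ncard_of_injOn σ (fun v hv => (hG v fun hvC => hv (hCS hvC)).1) hinj
  have := Set.ncard_add_ncard_compl S
  have := Set.ncard_add_ncard_compl (Set.range leaf)
  omega

end PendantOn

namespace Iso

lemma forced_image (f : G ≃g H) {S : Set V} {v : V} (hv : G.Forced S v) :
    H.Forced (f '' S) (f v) := by
  induction hv with
  | init v hv => exact .init _ (Set.mem_image_of_mem f hv)
  | force u w _ hadj _ ihu ih =>
    refine .force _ _ ihu (f.map_adj_iff.mpr hadj) fun x hx hxw => ?_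
    rw [← f.apply_symm_apply x] at hx hxw ⊢
    exact ih _ (f.map_adj_iff.mp hx) (fun h => hxw (h ▸ rfl))

lemma isTotalForcingSet_image (f : G ≃g H) {S : Set V} (hS : G.IsTotalForcingSet S) :
    H.IsTotalForcingSet (f '' S) := by
  refine ⟨fun w => f.apply_symm_apply w ▸ f.forced_image (hS.1 _), ?_⟩
  rintro _ ⟨v, hv, rfl⟩
  obtain ⟨u, hu, hvu⟩ := hS.2 v hv
  exact ⟨f u, Set.mem_image_of_mem f hu, f.map_adj_iff.mpr hvu⟩

lemma exists_isTotalForcingSet_ncard_eq (f : G ≃g H) {n : ℕ}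
    (h : ∃ S, G.IsTotalForcingSet S ∧ S.ncard = n) :
    ∃ S, H.IsTotalForcingSet S ∧ S.ncard = n := by
  obtain ⟨S, hS, rfl⟩ := h
  exact ⟨f '' S, f.isTotalForcingSet_image hS, Set.ncard_image_of_injective S f.injective⟩

lemma totalForcingNumber_eq (f : G ≃g H) : G.totalForcingNumber = H.totalForcingNumber :=
  congrArg sInf <| Set.ext fun _ =>
    ⟨f.exists_isTotalForcingSet_ncard_eq, f.symm.exists_isTotalForcingSet_ncard_eq⟩

lemma isPathSet_image (f : G ≃g H) {Q : Set V} (hQ : G.IsPathSet Q) :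
    H.IsPathSet (f '' Q) := by
  obtain ⟨u, v, w, hw, rfl⟩ := hQ
  refine ⟨f u, f v, w.map f.toHom, hw.map f.injective, ?_⟩
  ext x
  simp

lemma isPathCover_image (f : G ≃g H) {P : Set (Set V)} (hP : G.IsPathCover P) :
    H.IsPathCover (Set.image f '' P) := by
  obtain ⟨hpath, hdisj, hcover⟩ := hP
  refine ⟨?_, ?_, ?_⟩
  · rintro _ ⟨Q, hQ, rfl⟩
    exact f.isPathSet_image (hpath Q hQ)
  · rintro _ ⟨Q₁, h₁, rfl⟩ _ ⟨Q₂, h₂, rfl⟩ hne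
    exact (Set.disjoint_image_iff f.injective).mpr (hdisj h₁ h₂ fun h => hne (h ▸ rfl))
  · rw [← Set.image_sUnion, hcover, Set.image_univ_of_surjective f.surjective]

lemma exists_isPathCover_ncard_eq (f : G ≃g H) {n : ℕ}
    (h : ∃ P, G.IsPathCover P ∧ P.ncard = n) : ∃ P, H.IsPathCover P ∧ P.ncard = n := by
  obtain ⟨P, hP, rfl⟩ := h
  exact ⟨_, f.isPathCover_image hP,
    Set.ncard_image_of_injective P (Set.image_injective.mpr f.injective)⟩

lemma pathCoverNumber_eq (f : G ≃g H) : G.pathCoverNumber = H.pathCoverNumber :=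
  congrArg sInf <| Set.ext fun _ =>
    ⟨f.exists_isPathCover_ncard_eq, f.symm.exists_isPathCover_ncard_eq⟩

end Iso

def parentGraph (p : V → V) : SimpleGraph V := fromRel fun v w => w = p v

section ParentGraph

variable {p : V → V}

lemma parentGraph_adj {v w : V} : (parentGraph p).Adj v w ↔ v ≠ w ∧ (w = p v ∨ v = p w) :=
  fromRel_adj _ _ _

lemma parentGraph_adj_iff_of_notMem_range {v w : V} (hv : v ∉ Set.range p) :
    (parentGraph p).Adj v w ↔ w = p v := by
  rw [parentGraph_adj]
  constructor
  · rintro ⟨-, hw | rfl⟩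
    · exact hw
    · exact absurd ⟨w, rfl⟩ hv
  · rintro rfl
    exact ⟨fun hvp => hv ⟨v, hvp.symm⟩, Or.inl rfl⟩

lemma parentGraph_pendantOn (p : V → V) : (parentGraph p).PendantOn (Set.range p) p :=
  fun _ hv => ⟨⟨_, rfl⟩, fun _ => parentGraph_adj_iff_of_notMem_range hv⟩

lemma parentGraph_isAcyclic (h : V → ℕ) (hh : ∀ v, p v ≠ v → h (p v) < h v) :
    (parentGraph p).IsAcyclic := by
  classical
  intro u c hc
  -- both cycle neighbours of a highest vertex of the cycle would have to be its parent
  obtain ⟨x, hx, hmax⟩ := c.support.toFinset.exists_max_image h ⟨u, by simp⟩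
  rw [List.mem_toFinset] at hx
  obtain ⟨y, z, hyz, hxy, hxz, hy, hz⟩ := hc.exists_adj_ne_of_mem_support hx
  have hparent : ∀ w ∈ c.support, (parentGraph p).Adj x w → w = p x := by
    intro w hw hxw
    rcases (parentGraph_adj.mp hxw).2 with hw' | rfl
    · exact hw'
    · have := hh w (parentGraph_adj.mp hxw).1
      have := hmax w (List.mem_toFinset.mpr hw)
      omega
  exact hyz ((hparent y hy hxy).trans (hparent z hz hxz).symm)

lemma parentGraph_connected (h : V → ℕ) (hh : ∀ v, p v ≠ v → h (p v) < h v) (r : V)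
    (hr : ∀ v, p v = v → v = r) : (parentGraph p).Connected := by
  have hreach : ∀ n, ∀ v, h v = n → (parentGraph p).Reachable v r := by
    intro n
    induction n using Nat.strong_induction_on with
    | _ n ih =>
      intro v hv
      by_cases hpv : p v = v
      · rw [hr v hpv]
      · have hadj : (parentGraph p).Adj v (p v) := parentGraph_adj.mpr ⟨Ne.symm hpv, Or.inl rfl⟩
        exact hadj.reachable.trans (ih _ (hv ▸ hh v hpv) _ rfl)
  exact (connected_iff _).mpr ⟨fun v w => (hreach _ v rfl).trans (hreach _ w rfl).symm, ⟨r⟩⟩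

lemma parentGraph_isTree (h : V → ℕ) (hh : ∀ v, p v ≠ v → h (p v) < h v) (r : V)
    (hr : ∀ v, p v = v → v = r) : (parentGraph p).IsTree :=
  ⟨parentGraph_connected h hh r hr, parentGraph_isAcyclic h hh⟩

end ParentGraph

/-- Vertex `.inl (o, none)` is the centre of cherry `o` and `.inl (o, some b)` are its two
leaves; the centre of cherry `none` is the parent of all other centres and of the `r` extra
leaves `.inr j`. -/
abbrev CherryVertex (g r : ℕ) := Option (Fin g) × Option Bool ⊕ Fin r

section CherryTree

variable {g r : ℕ}

def cherryParent : CherryVertex g r → CherryVertex g r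
  | .inl (o, some _) => .inl (o, none)
  | _ => .inl (none, none)

def cherryDepth : CherryVertex g r → ℕ
  | .inl (_, some _) => 2
  | .inl (some _, none) => 1
  | .inl (none, none) => 0
  | .inr _ => 1

variable (g r) in
def cherryTree : SimpleGraph (CherryVertex g r) := parentGraph cherryParent

lemma cherryTree_isTree : (cherryTree g r).IsTree :=
  parentGraph_isTree cherryDepth
    (by rintro (⟨_ | _, _ | _⟩ | _) <;> simp [cherryParent, cherryDepth])
    (.inl (none, none)) (by rintro (⟨_ | _, _ | _⟩ | _) <;> simp [cherryParent])

lemma card_cherryVertex : Nat.card (CherryVertex g r) = 3 * (g + 1) + r := by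
  simp only [Nat.card_eq_fintype_card, Fintype.card_sum, Fintype.card_prod,
    Fintype.card_option, Fintype.card_fin, Fintype.card_bool]
  ring

lemma range_cherryParent :
    Set.range (cherryParent : CherryVertex g r → _) = Set.range fun o => .inl (o, none) := by
  ext v
  constructor
  · rintro ⟨(⟨o, _ | _⟩ | _), rfl⟩ <;> simp [cherryParent]
  · rintro ⟨o, rfl⟩
    exact ⟨.inl (o, some true), rfl⟩

lemma ncard_range_cherryParent :
    (Set.range (cherryParent : CherryVertex g r → _)).ncard = g + 1 := by
  rw [range_cherryParent, Set.ncard_range_of_injective (fun _ _ h => by simpa using h)]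
  simp

lemma cherryParent_exists_two_leaves (c : CherryVertex g r) (hc : c ∈ Set.range cherryParent) :
    ∃ a b, a ∉ Set.range cherryParent ∧ b ∉ Set.range cherryParent ∧ a ≠ b ∧
      cherryParent a = c ∧ cherryParent b = c := by
  rw [range_cherryParent] at hc ⊢
  obtain ⟨o, rfl⟩ := hc
  exact ⟨.inl (o, some false), .inl (o, some true), by simp, by simp, by simp, rfl, rfl⟩

lemma cherryTree_totalForcingNumber :
    (cherryTree g r).totalForcingNumber = 2 * (g + 1) + r := by
  have := (parentGraph_pendantOn (cherryParent : CherryVertex g r → _)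
    ).totalForcingNumber_add_ncard cherryParent_exists_two_leaves
  rw [ncard_range_cherryParent, card_cherryVertex] at this
  unfold cherryTree
  omega

lemma isPathSet_cherryTree_preimage (i : Option (Fin g) ⊕ Fin r) :
    (cherryTree g r).IsPathSet (Sum.map Prod.fst id ⁻¹' {i}) := by
  rcases i with o | j
  · have h₁ : (cherryTree g r).Adj (.inl (o, some false)) (.inl (o, none)) :=
      parentGraph_adj.mpr ⟨by simp, Or.inl rfl⟩
    have h₂ : (cherryTree g r).Adj (.inl (o, none)) (.inl (o, some true)) :=
      parentGraph_adj.mpr ⟨by simp, Or.inr rfl⟩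
    refine ⟨_, _, .cons h₁ (.cons h₂ .nil), by simp, ?_⟩
    ext ((⟨o', _ | _ | _⟩) | j) <;> simp [eq_comm]
  · refine ⟨.inr j, .inr j, .nil, .nil, ?_⟩
    ext (_ | j') <;> simp [eq_comm]

lemma cherryTree_pathCoverNumber : (cherryTree g r).pathCoverNumber = g + 1 + r := by
  refine le_antisymm ?_ ?_
  · simpa using pathCoverNumber_le_of_isPathSet_preimage _ isPathSet_cherryTree_preimage
  · obtain ⟨P, hP, hPcard⟩ := (cherryTree g r).exists_isPathCover_ncard_eq_pathCoverNumber
    have := (parentGraph_pendantOn (cherryParent : CherryVertex g r → _)).ncard_compl_le hP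
    have := Set.ncard_add_ncard_compl (Set.range (cherryParent : CherryVertex g r → _))
    rw [ncard_range_cherryParent, card_cherryVertex] at *
    omega

end CherryTree

end SimpleGraph

theorem stmt13 (k l : ℕ) (hk : 1 ≤ k) (hkl : k ≤ l) :
    ∃ (n : ℕ) (T : SimpleGraph (Fin n)), T.IsTree ∧
      T.pathCoverNumber = l ∧ T.totalForcingNumber = k + l := by
  obtain ⟨g, rfl⟩ : ∃ g, k = g + 1 := ⟨k - 1, by omega⟩
  obtain ⟨r, rfl⟩ : ∃ r, l = g + 1 + r := ⟨l - (g + 1), by omega⟩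
  let e := (SimpleGraph.cherryTree g r).overFinIso rfl
  refine ⟨_, _, e.isTree_iff.mp SimpleGraph.cherryTree_isTree, ?_, ?_⟩
  · rw [← e.pathCoverNumber_eq, SimpleGraph.cherryTree_pathCoverNumber]
  · rw [← e.totalForcingNumber_eq, SimpleGraph.cherryTree_totalForcingNumber]
    omega
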